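/- In the setting of the parametrization theorem (Q : I × ℝᵏ ⇉ ℝᵐ with nonempty closed convex values, measurable in t, locally Lipschitz in x; δ : I × ℝᵏ ⇉ ℝᵐ with nonempty closed values measurable in t; and φ(t,x,u) := S_m ∘ P(η(t,x)u, Q(t,x)) the constructed parametrization, where η(t,x) = ‖δ(t,x)‖ whenever 0 < ‖δ(t,x)‖ < +∞ and 1 otherwise), for every (t,x) ∈ I × ℝᵐ with δ(t,x) bounded and δ(t,x) ≠ {0}, and for every γ ∈ Q(t,x) ∩ δ(t,x) and every θ ∈ φ(t,x,B), one has |γ − θ| ≤ 10 m ‖δ(t,x)‖; in particular the Hausdorff distance between Q(t,x) ∩ δ(t,x) and φ(t,x,B) is at most 10 m ‖δ(t,x)‖. -/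

import Mathlib

open Set Metric Pointwise
open scoped ENNReal

noncomputable section

abbrev En (n : ℕ) := EuclideanSpace ℝ (Fin n)

/-- `‖E‖ = sup{ |k| : k ∈ E } ∈ [0,+∞]` for a subset `E` of a normed space. -/
noncomputable def setSupNorm {E : Type*} [NormedAddCommGroup E] (A : Set E) : ℝ≥0∞ :=
  ⨆ x ∈ A, (‖x‖₊ : ℝ≥0∞)

/-- A set-valued map `S` on `I ⊆ ℝ` (with closed values) is measurable if the preimage of
every open set is Lebesgue measurable. -/
def SVMeasOn {α : Type*} [TopologicalSpace α] (I : Set ℝ) (S : ℝ → Set α) : Prop :=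
  ∀ U : Set α, IsOpen U → MeasurableSet {t : ℝ | t ∈ I ∧ (S t ∩ U).Nonempty}

/-- The projection map `P(u,J) = J ∩ B(u, 2d(u,J))`. -/
noncomputable def projSet {E : Type*} [NormedAddCommGroup E] (u : E) (J : Set E) : Set E :=
  J ∩ closedBall u (2 * infDist u J)

open Classical in
/-- `η(t,x) = ‖δ(t,x)‖` whenever `0 < ‖δ(t,x)‖ < +∞`, and `η(t,x) = 1` otherwise. -/
noncomputable def etaOf {k m : ℕ} (δ : ℝ → En k → Set (En m)) (t : ℝ) (x : En k) : ℝ :=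
  if 0 < setSupNorm (δ t x) ∧ setSupNorm (δ t x) < ⊤ then (setSupNorm (δ t x)).toReal
  else 1

/-!
Since `γ ∈ Q(t,x)`, the distance from `v = η(t,x) u` to `Q(t,x)` is at most `|γ - v|`, so every
point of `P(v, Q(t,x))`, in particular its Steiner point `θ`, lies within `3 |γ - v|` of `γ`. As
`δ(t,x)` is bounded and not `{0}`, `η(t,x) = ‖δ(t,x)‖`, hence `|γ|, |v| ≤ ‖δ(t,x)‖` and
`|γ - θ| ≤ 6 ‖δ(t,x)‖ ≤ 10 m ‖δ(t,x)‖` (for `m = 0` the space is a point).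
-/

section SetSupNorm

variable {E : Type*} [NormedAddCommGroup E] {A : Set E}

theorem setSupNorm_lt_top (hA : Bornology.IsBounded A) : setSupNorm A < ⊤ := by
  obtain ⟨R, hR⟩ := hA.subset_closedBall 0
  refine lt_of_le_of_lt (iSup₂_le fun y hy => ?_) (ENNReal.ofReal_lt_top (r := R))
  rw [← enorm_eq_nnnorm, ← ofReal_norm]
  exact ENNReal.ofReal_le_ofReal (mem_closedBall_zero_iff.mp (hR hy))

theorem norm_le_of_mem_of_setSupNorm_ne_top (hA : setSupNorm A ≠ ⊤) {y : E} (hy : y ∈ A) :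
    ‖y‖ ≤ (setSupNorm A).toReal := by
  have : (‖y‖₊ : ℝ≥0∞) ≤ setSupNorm A :=
    le_iSup₂ (f := fun z (_ : z ∈ A) => (‖z‖₊ : ℝ≥0∞)) y hy
  simpa using ENNReal.toReal_mono hA this

theorem setSupNorm_pos (hA : A.Nonempty) (h0 : A ≠ {0}) : 0 < setSupNorm A := by
  obtain ⟨a, ha, ha0⟩ : ∃ a ∈ A, a ≠ 0 := by
    by_contra! h
    exact h0 (eq_singleton_iff_nonempty_unique_mem.mpr ⟨hA, h⟩)
  calc (0 : ℝ≥0∞) < ‖a‖₊ := by simpa using ha0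
    _ ≤ setSupNorm A := le_iSup₂ (f := fun y (_ : y ∈ A) => (‖y‖₊ : ℝ≥0∞)) a ha

end SetSupNorm

theorem etaOf_eq_toReal_setSupNorm {k m : ℕ} {δ : ℝ → En k → Set (En m)} {t : ℝ} {x : En k}
    (hbdd : Bornology.IsBounded (δ t x)) (hne : (δ t x).Nonempty) (h0 : δ t x ≠ {0}) :
    etaOf δ t x = (setSupNorm (δ t x)).toReal := by
  rw [etaOf, if_pos ⟨setSupNorm_pos hne h0, setSupNorm_lt_top hbdd⟩]

section ProjSet

variable {E : Type*} [NormedAddCommGroup E] {u : E} {J : Set E}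

theorem projSet_nonempty [ProperSpace E] (hJ : IsClosed J) (hne : J.Nonempty) :
    (projSet u J).Nonempty := by
  obtain ⟨y, hyJ, hy⟩ := hJ.exists_infDist_eq_dist hne u
  refine ⟨y, hyJ, ?_⟩
  rw [mem_closedBall, dist_comm, ← hy]
  linarith [infDist_nonneg (x := u) (s := J)]

theorem isClosed_projSet (hJ : IsClosed J) : IsClosed (projSet u J) :=
  hJ.inter isClosed_closedBall

theorem isBounded_projSet : Bornology.IsBounded (projSet u J) :=
  isBounded_closedBall.subset inter_subset_right

theorem convex_projSet [NormedSpace ℝ E] (hJ : Convex ℝ J) : Convex ℝ (projSet u J) :=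
  hJ.inter (convex_closedBall _ _)

theorem dist_le_of_mem_projSet {γ θ : E} (hγ : γ ∈ J) (hθ : θ ∈ projSet u J) :
    dist γ θ ≤ 3 * dist γ u := by
  have hθu : dist θ u ≤ 2 * infDist u J := hθ.2
  have hd : infDist u J ≤ dist γ u := dist_comm u γ ▸ infDist_le_dist_of_mem hγ
  linarith [dist_triangle_right γ θ u]

theorem dist_selection_projSet_le [NormedSpace ℝ E] [ProperSpace E] (S : Set E → E)
    (hS : ∀ K : Set E, K.Nonempty → IsClosed K → Convex ℝ K → Bornology.IsBounded K → S K ∈ K)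
    (hJ : IsClosed J) (hJc : Convex ℝ J) {γ : E} (hγ : γ ∈ J) (v : E) :
    dist γ (S (projSet v J)) ≤ 3 * (‖γ‖ + ‖v‖) := by
  have hmem : S (projSet v J) ∈ projSet v J := hS _ (projSet_nonempty hJ ⟨γ, hγ⟩)
    (isClosed_projSet hJ) (convex_projSet hJc) isBounded_projSet
  calc dist γ (S (projSet v J)) ≤ 3 * dist γ v := dist_le_of_mem_projSet hγ hmem
    _ ≤ 3 * (‖γ‖ + ‖v‖) := by gcongr; exact dist_le_norm_add_norm γ v

end ProjSet

theorem hausdorffDist_le_of_forall_dist_le {α : Type*} [PseudoMetricSpace α] {s t : Set α}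
    {r : ℝ} (hr : 0 ≤ r) (h : ∀ a ∈ s, ∀ b ∈ t, dist a b ≤ r) : hausdorffDist s t ≤ r := by
  rcases s.eq_empty_or_nonempty with rfl | ⟨a, ha⟩
  · simpa using hr
  rcases t.eq_empty_or_nonempty with rfl | ⟨b, hb⟩
  · simpa using hr
  exact hausdorffDist_le_of_mem_dist hr (fun a' ha' => ⟨b, hb, h a' ha' b hb⟩)
    (fun b' hb' => ⟨a, ha, dist_comm a b' ▸ h a ha b' hb'⟩)

theorem stmt_2_general {k m : ℕ} (I : Set ℝ)
    (Q : ℝ → En k → Set (En m))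
    (hQcl : ∀ t ∈ I, ∀ x, IsClosed (Q t x))
    (hQcv : ∀ t ∈ I, ∀ x, Convex ℝ (Q t x))
    (δ : ℝ → En k → Set (En m))
    -- `Sm` is the Steiner selection: `m`-Lipschitz for the Hausdorff distance on nonempty
    -- compact convex sets, with `Sm J ∈ J`
    (Sm : Set (En m) → En m)
    (hSmem : ∀ J : Set (En m), J.Nonempty → IsClosed J → Convex ℝ J →
      Bornology.IsBounded J → Sm J ∈ J) :
    ∀ t ∈ I, ∀ x : En k, Bornology.IsBounded (δ t x) → δ t x ≠ {0} →
      (∀ γ ∈ Q t x ∩ δ t x,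
        ∀ θ ∈ (fun u => Sm (projSet (etaOf δ t x • u) (Q t x))) '' closedBall 0 1,
          dist γ θ ≤ 10 * (m : ℝ) * (setSupNorm (δ t x)).toReal) ∧
      hausdorffDist (Q t x ∩ δ t x)
          ((fun u => Sm (projSet (etaOf δ t x • u) (Q t x))) '' closedBall 0 1) ≤
        10 * (m : ℝ) * (setSupNorm (δ t x)).toReal := by
  intro t ht x hbdd h0
  set r := (setSupNorm (δ t x)).toReal
  have key : ∀ γ ∈ Q t x ∩ δ t x,
      ∀ θ ∈ (fun u => Sm (projSet (etaOf δ t x • u) (Q t x))) '' closedBall 0 1,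
        dist γ θ ≤ 10 * (m : ℝ) * r := by
    rintro γ ⟨hγQ, hγδ⟩ θ ⟨u, hu, rfl⟩
    obtain rfl | hm := Nat.eq_zero_or_pos m
    · simpa using (dist_eq_zero.mpr (Subsingleton.elim _ _)).le
    have hγ : ‖γ‖ ≤ r := norm_le_of_mem_of_setSupNorm_ne_top (setSupNorm_lt_top hbdd).ne hγδ
    have hv : ‖etaOf δ t x • u‖ ≤ r := by
      rw [etaOf_eq_toReal_setSupNorm hbdd ⟨γ, hγδ⟩ h0, norm_smul, Real.norm_of_nonneg
        ENNReal.toReal_nonneg]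
      exact mul_le_of_le_one_right ENNReal.toReal_nonneg (mem_closedBall_zero_iff.mp hu)
    have hm1 : (1 : ℝ) ≤ m := by exact_mod_cast hm
    have hr : 0 ≤ r := ENNReal.toReal_nonneg
    calc dist γ (Sm (projSet (etaOf δ t x • u) (Q t x)))
        ≤ 3 * (‖γ‖ + ‖etaOf δ t x • u‖) :=
          dist_selection_projSet_le Sm hSmem (hQcl t ht x) (hQcv t ht x) hγQ _
      _ ≤ 10 * m * r := by nlinarith
  exact ⟨key, hausdorffDist_le_of_forall_dist_le (by positivity) key⟩

/-- Remark 3.1: in the setting of the parametrization theorem, with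
`φ(t,x,u) = S_m(P(η(t,x)u, Q(t,x)))` the constructed parametrization (where `S_m` is the
`m`-Lipschitz Steiner selection), if `δ(t,x)` is bounded and `δ(t,x) ≠ {0}`, then every
`γ ∈ Q(t,x) ∩ δ(t,x)` and every `θ ∈ φ(t,x,B)` satisfy `|γ − θ| ≤ 10 m ‖δ(t,x)‖`; in
particular the Hausdorff distance between `Q(t,x) ∩ δ(t,x)` and `φ(t,x,B)` is at most
`10 m ‖δ(t,x)‖`. -/
theorem stmt_2 {k m : ℕ} (I : Set ℝ) (hI : I ⊆ Ici 0) (hIcl : IsClosed I)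
    (hIoc : I.OrdConnected)
    (Q : ℝ → En k → Set (En m))
    (hQne : ∀ t ∈ I, ∀ x, (Q t x).Nonempty)
    (hQcl : ∀ t ∈ I, ∀ x, IsClosed (Q t x))
    (hQcv : ∀ t ∈ I, ∀ x, Convex ℝ (Q t x))
    (hQmeas : ∀ x, SVMeasOn I fun t => Q t x)
    (c : ℝ → ℝ → ℝ)
    (hc : ∀ t ∈ I, ∀ r > (0 : ℝ), 0 < c r t ∧
      ∀ x ∈ closedBall (0 : En k) r, ∀ y ∈ closedBall (0 : En k) r,
        Q t x ⊆ Q t y + closedBall 0 (c r t * ‖x - y‖))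
    (δ : ℝ → En k → Set (En m))
    (hδne : ∀ t ∈ I, ∀ x, (δ t x).Nonempty)
    (hδcl : ∀ t ∈ I, ∀ x, IsClosed (δ t x))
    (hδmeas : ∀ x, SVMeasOn I fun t => δ t x)
    -- `Sm` is the Steiner selection: `m`-Lipschitz for the Hausdorff distance on nonempty
    -- compact convex sets, with `Sm J ∈ J`
    (Sm : Set (En m) → En m)
    (hSmem : ∀ J : Set (En m), J.Nonempty → IsClosed J → Convex ℝ J →
      Bornology.IsBounded J → Sm J ∈ J)
    (hSlip : ∀ J K : Set (En m),
      J.Nonempty → IsClosed J → Convex ℝ J → Bornology.IsBounded J →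
      K.Nonempty → IsClosed K → Convex ℝ K → Bornology.IsBounded K →
      dist (Sm J) (Sm K) ≤ (m : ℝ) * hausdorffDist J K) :
    ∀ t ∈ I, ∀ x : En k, Bornology.IsBounded (δ t x) → δ t x ≠ {0} →
      (∀ γ ∈ Q t x ∩ δ t x,
        ∀ θ ∈ (fun u => Sm (projSet (etaOf δ t x • u) (Q t x))) '' closedBall 0 1,
          dist γ θ ≤ 10 * (m : ℝ) * (setSupNorm (δ t x)).toReal) ∧
      hausdorffDist (Q t x ∩ δ t x)
          ((fun u => Sm (projSet (etaOf δ t x • u) (Q t x))) '' closedBall 0 1) ≤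
        10 * (m : ℝ) * (setSupNorm (δ t x)).toReal :=
  stmt_2_general I Q hQcl hQcv δ Sm hSmem
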